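/- For every real r and every complex k, the plane wave e^{i k r cos θ} admits the expansion e^{i k r cos θ} = Σ_{n=-∞}^{∞} i^n J_n(k r) e^{i n θ}, where J_n is the Bessel function of the first kind of order n (the Jacobi–Anger expansion), with the series converging for each θ. -/

import Mathlib

/-!
Jacobi–Anger is the specialisation `t = i e^{iθ}`, for which `t - t⁻¹ = 2i cos θ`, of the
generating function `exp (z/2 · (t - t⁻¹)) = ∑ₙ Jₙ(z) tⁿ`. That identity comes from multiplying
the exponential series of `z t / 2` and `-z / (2t)`: the double series converges absolutely, and
regrouping its terms `(p, q)` by `n = p - q` (with `m = min p q` running along each fibre) turns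
the fibre over `n` into the power series of `Jₙ(z)` times `tⁿ`.
-/

open Complex Real MeasureTheory Filter Topology

/-- Bessel function of the first kind of nonnegative integer order (power series). -/
noncomputable def besselJnat (n : ℕ) (z : ℂ) : ℂ :=
  ∑' m : ℕ, ((-1 : ℂ) ^ m / ((Nat.factorial m : ℂ) * (Nat.factorial (m + n) : ℂ)))
    * (z / 2) ^ (2 * m + n)

/-- Bessel function of the first kind of integer order, using `J_{-n} = (-1)^n J_n`. -/
noncomputable def besselJ (n : ℤ) (z : ℂ) : ℂ :=
  if 0 ≤ n then besselJnat n.toNat z else (-1 : ℂ) ^ (-n).toNat * besselJnat (-n).toNat z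

/-- Partial sums of the harmonic series. -/
noncomputable def harmonicNum (m : ℕ) : ℝ := ∑ i ∈ Finset.range m, (1 : ℝ) / (i + 1)

/-- Bessel function of the second kind of nonnegative integer order (series expansion). -/
noncomputable def besselYnat (n : ℕ) (z : ℂ) : ℂ :=
  (2 / Real.pi) * (Complex.log (z / 2) + (Real.eulerMascheroniConstant : ℂ)) * besselJnat n z
    - (1 / Real.pi) * ∑ m ∈ Finset.range n,
        ((Nat.factorial (n - m - 1) : ℂ) / (Nat.factorial m : ℂ)) * (z / 2) ^ (2 * (m : ℤ) - (n : ℤ))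
    - (1 / Real.pi) * ∑' m : ℕ,
        ((-1 : ℂ) ^ m * ((harmonicNum m + harmonicNum (m + n) : ℝ) : ℂ)
          / ((Nat.factorial m : ℂ) * (Nat.factorial (m + n) : ℂ))) * (z / 2) ^ (2 * m + n)

/-- Bessel function of the second kind of integer order, `Y_{-n} = (-1)^n Y_n`. -/
noncomputable def besselY (n : ℤ) (z : ℂ) : ℂ :=
  if 0 ≤ n then besselYnat n.toNat z else (-1 : ℂ) ^ (-n).toNat * besselYnat (-n).toNat z

/-- Hankel function of the first kind, `H_n = J_n + i Y_n`. -/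
noncomputable def hankelH (n : ℤ) (z : ℂ) : ℂ := besselJ n z + Complex.I * besselY n z

/-- Derivative of `J_n`. -/
noncomputable def besselJ' (n : ℤ) (z : ℂ) : ℂ := deriv (besselJ n) z

/-- Derivative of `H_n`. -/
noncomputable def hankelH' (n : ℤ) (z : ℂ) : ℂ := deriv (hankelH n) z

/-- The branch of `√(λ² - k²)` given by the principal complex square root. -/
noncomputable def sqrtBr (k : ℂ) (l : ℝ) : ℂ := ((l : ℂ) ^ 2 - k ^ 2) ^ (1/2 : ℂ)

open scoped Nat

theorem Complex.hasSum_pow_div_factorial (w : ℂ) :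
    HasSum (fun n : ℕ => w ^ n / n !) (Complex.exp w) := by
  rw [Complex.exp_eq_exp_ℂ]
  exact NormedSpace.expSeries_div_hasSum_exp w

theorem Complex.hasSum_pow_div_factorial_mul_pow_div_factorial (u v : ℂ) :
    HasSum (fun x : ℕ × ℕ => u ^ x.1 / x.1 ! * (v ^ x.2 / x.2 !)) (Complex.exp (u + v)) := by
  have hsummable : Summable fun x : ℕ × ℕ => u ^ x.1 / x.1 ! * (v ^ x.2 / x.2 !) :=
    summable_mul_of_summable_norm (f := fun n : ℕ => u ^ n / (n ! : ℂ))
      (g := fun n : ℕ => v ^ n / (n ! : ℂ))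
      (NormedSpace.norm_expSeries_div_summable u) (NormedSpace.norm_expSeries_div_summable v)
  have hprod := (hasSum_pow_div_factorial u).mul (hasSum_pow_div_factorial v) hsummable
  rwa [Complex.exp_add]

theorem summable_besselJnat_series (n : ℕ) (z : ℂ) :
    Summable fun m : ℕ => (-1 : ℂ) ^ m / ((m ! : ℂ) * ((m + n) ! : ℂ)) * (z / 2) ^ (2 * m + n) := by
  refine .of_norm_bounded
    ((NormedSpace.norm_expSeries_div_summable ((z / 2) ^ 2)).mul_right ‖(z / 2) ^ n‖) fun m => ?_
  have hfac : (1 : ℝ) ≤ ((m + n) ! : ℝ) := Nat.one_le_cast.mpr (Nat.factorial_pos _)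
  simp only [norm_mul, norm_div, norm_pow, norm_neg, norm_one, one_pow, Complex.norm_natCast]
  rw [one_div_mul_eq_div, pow_add, ← pow_mul, div_mul_eq_mul_div]
  exact div_le_div_of_nonneg_left (by positivity) (by positivity)
    (le_mul_of_one_le_right (by positivity) hfac)

theorem besselJ_natCast (k : ℕ) (z : ℂ) : besselJ k z = besselJnat k z := by
  simp [besselJ]

theorem besselJ_neg_natCast (k : ℕ) (z : ℂ) : besselJ (-k) z = (-1) ^ k * besselJnat k z := by
  rcases k.eq_zero_or_pos with rfl | hk
  · simp [besselJ]
  · simp [besselJ, hk.ne']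

def subMinEquiv : ℕ × ℕ ≃ ℤ × ℕ where
  toFun x := ((x.1 : ℤ) - x.2, min x.1 x.2)
  invFun y := (y.2 + y.1.toNat, y.2 + (-y.1).toNat)
  left_inv := by rintro ⟨p, q⟩; simp only [Prod.mk.injEq]; omega
  right_inv := by rintro ⟨n, m⟩; simp only [Prod.mk.injEq]; omega

theorem subMinEquiv_symm_natCast (k m : ℕ) : subMinEquiv.symm (k, m) = (m + k, m) := by
  simp [subMinEquiv]

theorem subMinEquiv_symm_neg_natCast (k m : ℕ) : subMinEquiv.symm (-k, m) = (m, m + k) := by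
  simp [subMinEquiv]

theorem pow_div_factorial_mul_pow_div_factorial_add_left (a t : ℂ) (ht : t ≠ 0) (k m : ℕ) :
    (a * t) ^ (m + k) / (m + k)! * ((-a * t⁻¹) ^ m / m !) =
      (-1 : ℂ) ^ m / ((m ! : ℂ) * ((m + k) ! : ℂ)) * a ^ (2 * m + k) * t ^ k := by
  rw [mul_pow, mul_pow, inv_pow]
  field_simp
  ring

theorem pow_div_factorial_mul_pow_div_factorial_add_right (a t : ℂ) (ht : t ≠ 0) (k m : ℕ) :
    (a * t) ^ m / m ! * ((-a * t⁻¹) ^ (m + k) / (m + k)!) =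
      (-1 : ℂ) ^ k * ((-1 : ℂ) ^ m / ((m ! : ℂ) * ((m + k) ! : ℂ)) * a ^ (2 * m + k)) *
        t ^ (-k : ℤ) := by
  rw [zpow_neg, zpow_natCast, mul_pow, mul_pow, inv_pow]
  field_simp
  ring

theorem hasSum_besselJ_mul_zpow (z t : ℂ) (ht : t ≠ 0) :
    HasSum (fun n : ℤ => besselJ n z * t ^ n) (Complex.exp (z / 2 * (t - t⁻¹))) := by
  have hprod := hasSum_pow_div_factorial_mul_pow_div_factorial (z / 2 * t) (-(z / 2) * t⁻¹)
  rw [← show z / 2 * (t - t⁻¹) = z / 2 * t + -(z / 2) * t⁻¹ by ring] at hprod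
  refine (subMinEquiv.symm.hasSum_iff.2 hprod).prod_fiberwise fun n => ?_
  obtain ⟨k, rfl | rfl⟩ := Int.eq_nat_or_neg n
  · rw [besselJ_natCast, zpow_natCast]
    refine ((summable_besselJnat_series k z).hasSum.mul_right (t ^ k)).congr_fun fun m => ?_
    rw [Function.comp_apply, subMinEquiv_symm_natCast]
    exact pow_div_factorial_mul_pow_div_factorial_add_left _ t ht k m
  · rw [besselJ_neg_natCast]
    refine (((summable_besselJnat_series k z).hasSum.mul_left _).mul_right _).congr_fun fun m => ?_
    rw [Function.comp_apply, subMinEquiv_symm_neg_natCast]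
    exact pow_div_factorial_mul_pow_div_factorial_add_right _ t ht k m

/-- Jacobi–Anger expansion: `e^{i k r cos θ} = Σ_{n∈ℤ} iⁿ Jₙ(k r) e^{i n θ}`. -/
theorem jacobi_anger (r : ℝ) (k : ℂ) (θ : ℝ) :
    HasSum (fun n : ℤ => Complex.I ^ n * besselJ n (k * r) * Complex.exp (Complex.I * n * θ))
      (Complex.exp (Complex.I * k * r * Real.cos θ)) := by
  set t := I * Complex.exp (θ * I)
  have ht : t ≠ 0 := mul_ne_zero I_ne_zero (Complex.exp_ne_zero _)
  have hexponent : k * r / 2 * (t - t⁻¹) = I * k * r * Real.cos θ := by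
    rw [mul_inv, inv_I, ← Complex.exp_neg, ← neg_mul, ofReal_cos]
    linear_combination (-I * k * r / 2) * Complex.two_cos (θ : ℂ)
  have hpow (n : ℤ) : t ^ n = I ^ n * Complex.exp (I * n * θ) := by
    rw [mul_zpow, ← Complex.exp_int_mul]
    ring_nf
  simpa only [hexponent, hpow, mul_comm, mul_left_comm, mul_assoc]
    using hasSum_besselJ_mul_zpow (k * r) t ht
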